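/- Let A be a block upper triangular (n+1)×(n+1) real matrix of the form A = [[0, bᵀ],[0, C]] with C invertible. Then ∫₀ᵗ e^{As} ds = [[t, bᵀ (C⁻¹)² (e^{Ct} − I) − t bᵀ C⁻¹],[0, C⁻¹ (e^{Ct} − I)]] for all t ≥ 0. -/

import Mathlib

open Matrix intervalIntegral

open NormedSpace
open scoped Nat

section Aux
variable (n : ℕ)

noncomputable def blk11 : Matrix (Fin 1 ⊕ Fin n) (Fin 1 ⊕ Fin n) ℝ →L[ℝ] Matrix (Fin 1) (Fin 1) ℝ := by
  letI : NormedRing (Matrix (Fin 1 ⊕ Fin n) (Fin 1 ⊕ Fin n) ℝ) := Matrix.linftyOpNormedRing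
  letI : NormedAlgebra ℝ (Matrix (Fin 1 ⊕ Fin n) (Fin 1 ⊕ Fin n) ℝ) := Matrix.linftyOpNormedAlgebra
  letI : NormedRing (Matrix (Fin 1) (Fin 1) ℝ) := Matrix.linftyOpNormedRing
  letI : NormedAlgebra ℝ (Matrix (Fin 1) (Fin 1) ℝ) := Matrix.linftyOpNormedAlgebra
  exact LinearMap.toContinuousLinearMap
    { toFun := Matrix.toBlocks₁₁, map_add' := fun _ _ => rfl, map_smul' := fun _ _ => rfl }

noncomputable def blk12 : Matrix (Fin 1 ⊕ Fin n) (Fin 1 ⊕ Fin n) ℝ →L[ℝ] Matrix (Fin 1) (Fin n) ℝ := by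
  letI : NormedRing (Matrix (Fin 1 ⊕ Fin n) (Fin 1 ⊕ Fin n) ℝ) := Matrix.linftyOpNormedRing
  letI : NormedAlgebra ℝ (Matrix (Fin 1 ⊕ Fin n) (Fin 1 ⊕ Fin n) ℝ) := Matrix.linftyOpNormedAlgebra
  letI : NormedAddCommGroup (Matrix (Fin 1) (Fin n) ℝ) := Matrix.linftyOpNormedAddCommGroup
  letI : NormedSpace ℝ (Matrix (Fin 1) (Fin n) ℝ) := Matrix.linftyOpNormedSpace
  exact LinearMap.toContinuousLinearMap
    { toFun := Matrix.toBlocks₁₂, map_add' := fun _ _ => rfl, map_smul' := fun _ _ => rfl }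

noncomputable def blk21 : Matrix (Fin 1 ⊕ Fin n) (Fin 1 ⊕ Fin n) ℝ →L[ℝ] Matrix (Fin n) (Fin 1) ℝ := by
  letI : NormedRing (Matrix (Fin 1 ⊕ Fin n) (Fin 1 ⊕ Fin n) ℝ) := Matrix.linftyOpNormedRing
  letI : NormedAlgebra ℝ (Matrix (Fin 1 ⊕ Fin n) (Fin 1 ⊕ Fin n) ℝ) := Matrix.linftyOpNormedAlgebra
  letI : NormedAddCommGroup (Matrix (Fin n) (Fin 1) ℝ) := Matrix.linftyOpNormedAddCommGroup
  letI : NormedSpace ℝ (Matrix (Fin n) (Fin 1) ℝ) := Matrix.linftyOpNormedSpace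
  exact LinearMap.toContinuousLinearMap
    { toFun := Matrix.toBlocks₂₁, map_add' := fun _ _ => rfl, map_smul' := fun _ _ => rfl }

noncomputable def blk22 : Matrix (Fin 1 ⊕ Fin n) (Fin 1 ⊕ Fin n) ℝ →L[ℝ] Matrix (Fin n) (Fin n) ℝ := by
  letI : NormedRing (Matrix (Fin 1 ⊕ Fin n) (Fin 1 ⊕ Fin n) ℝ) := Matrix.linftyOpNormedRing
  letI : NormedAlgebra ℝ (Matrix (Fin 1 ⊕ Fin n) (Fin 1 ⊕ Fin n) ℝ) := Matrix.linftyOpNormedAlgebra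
  letI : NormedRing (Matrix (Fin n) (Fin n) ℝ) := Matrix.linftyOpNormedRing
  letI : NormedAlgebra ℝ (Matrix (Fin n) (Fin n) ℝ) := Matrix.linftyOpNormedAlgebra
  exact LinearMap.toContinuousLinearMap
    { toFun := Matrix.toBlocks₂₂, map_add' := fun _ _ => rfl, map_smul' := fun _ _ => rfl }

noncomputable def lmul12 (B : Matrix (Fin 1) (Fin n) ℝ) (C : Matrix (Fin n) (Fin n) ℝ) :
    Matrix (Fin n) (Fin n) ℝ →L[ℝ] Matrix (Fin 1) (Fin n) ℝ := by
  letI : NormedRing (Matrix (Fin n) (Fin n) ℝ) := Matrix.linftyOpNormedRing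
  letI : NormedAlgebra ℝ (Matrix (Fin n) (Fin n) ℝ) := Matrix.linftyOpNormedAlgebra
  letI : NormedAddCommGroup (Matrix (Fin 1) (Fin n) ℝ) := Matrix.linftyOpNormedAddCommGroup
  letI : NormedSpace ℝ (Matrix (Fin 1) (Fin n) ℝ) := Matrix.linftyOpNormedSpace
  exact LinearMap.toContinuousLinearMap
    { toFun := fun X => B * (C⁻¹ * X),
      map_add' := fun _ _ => by simp [Matrix.mul_add]
      map_smul' := fun _ _ => by simp [Matrix.mul_smul] }

@[simp] theorem blk11_apply (M) : blk11 n M = M.toBlocks₁₁ := rfl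
@[simp] theorem blk12_apply (M) : blk12 n M = M.toBlocks₁₂ := rfl
@[simp] theorem blk21_apply (M) : blk21 n M = M.toBlocks₂₁ := rfl
@[simp] theorem blk22_apply (M) : blk22 n M = M.toBlocks₂₂ := rfl
@[simp] theorem lmul12_apply (B C X) : lmul12 n B C X = B * (C⁻¹ * X) := rfl

end Aux

theorem pow_fromBlocks {n : ℕ} (B : Matrix (Fin 1) (Fin n) ℝ) (C : Matrix (Fin n) (Fin n) ℝ)
    (k : ℕ) : (Matrix.fromBlocks (0 : Matrix (Fin 1) (Fin 1) ℝ) B 0 C) ^ (k + 1) =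
      Matrix.fromBlocks 0 (B * C ^ k) 0 (C ^ (k + 1)) := by
  induction k with
  | zero => simp
  | succ k ih =>
    rw [pow_succ, ih]
    simp [Matrix.fromBlocks_multiply, Matrix.mul_assoc, ← pow_succ]

set_option maxHeartbeats 1000000 in
theorem exp_fromBlocks {n : ℕ} (B : Matrix (Fin 1) (Fin n) ℝ) (C : Matrix (Fin n) (Fin n) ℝ)
    (hC : IsUnit C.det) (s : ℝ) :
    NormedSpace.exp (s • Matrix.fromBlocks (0 : Matrix (Fin 1) (Fin 1) ℝ) B 0 C) =
      Matrix.fromBlocks 1 (B * (C⁻¹ * (NormedSpace.exp (s • C) - 1))) 0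
        (NormedSpace.exp (s • C)) := by
  letI : NormedRing (Matrix (Fin 1 ⊕ Fin n) (Fin 1 ⊕ Fin n) ℝ) := Matrix.linftyOpNormedRing
  letI : NormedAlgebra ℝ (Matrix (Fin 1 ⊕ Fin n) (Fin 1 ⊕ Fin n) ℝ) := Matrix.linftyOpNormedAlgebra
  letI : NormedRing (Matrix (Fin n) (Fin n) ℝ) := Matrix.linftyOpNormedRing
  letI : NormedAlgebra ℝ (Matrix (Fin n) (Fin n) ℝ) := Matrix.linftyOpNormedAlgebra
  set A := Matrix.fromBlocks (0 : Matrix (Fin 1) (Fin 1) ℝ) B 0 C with hA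
  have hs : Summable (fun k : ℕ => (k ! : ℝ)⁻¹ • (s • A) ^ k) := expSeries_summable' _
  have hsC : Summable (fun k : ℕ => (k ! : ℝ)⁻¹ • (s • C) ^ k) := expSeries_summable' _
  have e22 : (NormedSpace.exp (s • A)).toBlocks₂₂ = NormedSpace.exp (s • C) := by
    calc (exp (s • A)).toBlocks₂₂ = blk22 n (∑' k : ℕ, (k ! : ℝ)⁻¹ • (s • A) ^ k) := by
          simp only [exp_eq_tsum ℝ, blk11_apply, blk12_apply, blk21_apply, blk22_apply]
      _ = ∑' k : ℕ, blk22 n ((k ! : ℝ)⁻¹ • (s • A) ^ k) := (blk22 n).map_tsum hs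
      _ = ∑' k : ℕ, (k ! : ℝ)⁻¹ • (s • C) ^ k := by
          refine tsum_congr fun k => ?_
          cases k with
          | zero => simp [← Matrix.fromBlocks_one]
          | succ k => simp [smul_pow, hA, pow_fromBlocks, Matrix.fromBlocks_smul, smul_smul, ← pow_succ]
      _ = exp (s • C) := by simp only [exp_eq_tsum ℝ]
  have e11 : (NormedSpace.exp (s • A)).toBlocks₁₁ = 1 := by
    calc (exp (s • A)).toBlocks₁₁ = blk11 n (∑' k : ℕ, (k ! : ℝ)⁻¹ • (s • A) ^ k) := by
          simp only [exp_eq_tsum ℝ, blk11_apply, blk12_apply, blk21_apply, blk22_apply]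
      _ = ∑' k : ℕ, blk11 n ((k ! : ℝ)⁻¹ • (s • A) ^ k) := (blk11 n).map_tsum hs
      _ = 1 := by
          rw [tsum_eq_single 0]
          · simp [← Matrix.fromBlocks_one]
          · intro k hk
            obtain ⟨k, rfl⟩ := Nat.exists_eq_succ_of_ne_zero hk
            simp [smul_pow, hA, pow_fromBlocks, Matrix.fromBlocks_smul, smul_smul, ← pow_succ]
  have e21 : (NormedSpace.exp (s • A)).toBlocks₂₁ = 0 := by
    calc (exp (s • A)).toBlocks₂₁ = blk21 n (∑' k : ℕ, (k ! : ℝ)⁻¹ • (s • A) ^ k) := by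
          simp only [exp_eq_tsum ℝ, blk11_apply, blk12_apply, blk21_apply, blk22_apply]
      _ = ∑' k : ℕ, blk21 n ((k ! : ℝ)⁻¹ • (s • A) ^ k) := (blk21 n).map_tsum hs
      _ = 0 := by
          refine (tsum_congr fun k => ?_).trans tsum_zero
          cases k with
          | zero => simp [← Matrix.fromBlocks_one]
          | succ k => simp [smul_pow, hA, pow_fromBlocks, Matrix.fromBlocks_smul, smul_smul, ← pow_succ]
  have e12 : (NormedSpace.exp (s • A)).toBlocks₁₂
      = B * (C⁻¹ * (NormedSpace.exp (s • C) - 1)) := by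
    have hsub : NormedSpace.exp (s • C) - 1
        = ∑' k : ℕ, ((k+1)! : ℝ)⁻¹ • (s • C) ^ (k + 1) := by
      simp only [exp_eq_tsum ℝ]
      rw [Summable.tsum_eq_zero_add hsC]
      simp
    have htail : Summable (fun k : ℕ => ((k+1)! : ℝ)⁻¹ • (s • C) ^ (k + 1)) :=
      (summable_nat_add_iff 1).mpr hsC
    calc (exp (s • A)).toBlocks₁₂ = blk12 n (∑' k : ℕ, (k ! : ℝ)⁻¹ • (s • A) ^ k) := by
          simp only [exp_eq_tsum ℝ, blk11_apply, blk12_apply, blk21_apply, blk22_apply]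
      _ = ∑' k : ℕ, blk12 n ((k ! : ℝ)⁻¹ • (s • A) ^ k) := (blk12 n).map_tsum hs
      _ = ∑' k : ℕ, blk12 n (((k+1)! : ℝ)⁻¹ • (s • A) ^ (k + 1)) := by
          have hsb : Summable (fun k : ℕ => blk12 n ((k ! : ℝ)⁻¹ • (s • A) ^ k)) :=
            hs.map (blk12 n) (blk12 n).continuous
          rw [Summable.tsum_eq_zero_add hsb]
          simp [← Matrix.fromBlocks_one]
      _ = ∑' k : ℕ, ((k+1)! : ℝ)⁻¹ • s ^ (k + 1) • (B * C ^ k) := by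
          refine tsum_congr fun k => ?_
          simp [smul_pow, hA, pow_fromBlocks, Matrix.fromBlocks_smul, smul_smul, ← pow_succ]
      _ = ∑' k : ℕ, lmul12 n B C (((k+1)! : ℝ)⁻¹ • (s • C) ^ (k + 1)) := by
          refine tsum_congr fun k => ?_
          have hc : C⁻¹ * C ^ (k + 1) = C ^ k := by
            rw [pow_succ', Matrix.nonsing_inv_mul_cancel_left _ _ hC]
          simp [smul_pow, Matrix.mul_smul, hc]
      _ = lmul12 n B C (∑' k : ℕ, ((k+1)! : ℝ)⁻¹ • (s • C) ^ (k + 1)) :=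
          ((lmul12 n B C).map_tsum htail).symm
      _ = B * (C⁻¹ * (exp (s • C) - 1)) := by rw [← hsub]; rfl
  conv_lhs => rw [← Matrix.fromBlocks_toBlocks (NormedSpace.exp (s • A)), e11, e12, e21, e22]

noncomputable def phiL (n : ℕ) (B : Matrix (Fin 1) (Fin n) ℝ) (C : Matrix (Fin n) (Fin n) ℝ) :
    Matrix (Fin n) (Fin n) ℝ →L[ℝ] Matrix (Fin 1 ⊕ Fin n) (Fin 1 ⊕ Fin n) ℝ := by
  letI : NormedRing (Matrix (Fin n) (Fin n) ℝ) := Matrix.linftyOpNormedRing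
  letI : NormedAlgebra ℝ (Matrix (Fin n) (Fin n) ℝ) := Matrix.linftyOpNormedAlgebra
  letI : NormedRing (Matrix (Fin 1 ⊕ Fin n) (Fin 1 ⊕ Fin n) ℝ) := Matrix.linftyOpNormedRing
  letI : NormedAlgebra ℝ (Matrix (Fin 1 ⊕ Fin n) (Fin 1 ⊕ Fin n) ℝ) :=
    Matrix.linftyOpNormedAlgebra
  exact LinearMap.toContinuousLinearMap
    { toFun := fun X => Matrix.fromBlocks 0 (B * ((C⁻¹ * C⁻¹) * X)) 0 (C⁻¹ * X)
      map_add' := fun X Y => by simp [Matrix.mul_add, Matrix.fromBlocks_add]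
      map_smul' := fun r X => by simp [Matrix.mul_smul, Matrix.fromBlocks_smul] }

@[simp] theorem phiL_apply (n : ℕ) (B : Matrix (Fin 1) (Fin n) ℝ) (C X : Matrix (Fin n) (Fin n) ℝ) :
    phiL n B C X = Matrix.fromBlocks 0 (B * ((C⁻¹ * C⁻¹) * X)) 0 (C⁻¹ * X) := rfl

noncomputable def entryCLM (n : ℕ) (i j : Fin 1 ⊕ Fin n) :
    Matrix (Fin 1 ⊕ Fin n) (Fin 1 ⊕ Fin n) ℝ →L[ℝ] ℝ := by
  letI : NormedRing (Matrix (Fin 1 ⊕ Fin n) (Fin 1 ⊕ Fin n) ℝ) := Matrix.linftyOpNormedRing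
  letI : NormedAlgebra ℝ (Matrix (Fin 1 ⊕ Fin n) (Fin 1 ⊕ Fin n) ℝ) :=
    Matrix.linftyOpNormedAlgebra
  exact LinearMap.toContinuousLinearMap
    { toFun := fun M => M i j, map_add' := fun _ _ => rfl, map_smul' := fun _ _ => rfl }

@[simp] theorem entryCLM_apply (n : ℕ) (i j : Fin 1 ⊕ Fin n)
    (M : Matrix (Fin 1 ⊕ Fin n) (Fin 1 ⊕ Fin n) ℝ) : entryCLM n i j M = M i j := rfl

theorem hasDerivAt_exp_entry (n : ℕ) (B : Matrix (Fin 1) (Fin n) ℝ)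
    (C : Matrix (Fin n) (Fin n) ℝ) (i j : Fin 1 ⊕ Fin n) (s : ℝ) :
    HasDerivAt (fun u : ℝ => (phiL n B C) (NormedSpace.exp (u • C)) i j)
      ((phiL n B C) (C * NormedSpace.exp (s • C)) i j) s := by
  letI : NormedRing (Matrix (Fin n) (Fin n) ℝ) := Matrix.linftyOpNormedRing
  letI : NormedAlgebra ℝ (Matrix (Fin n) (Fin n) ℝ) := Matrix.linftyOpNormedAlgebra
  have h1 : HasDerivAt (fun u : ℝ => NormedSpace.exp (u • C))
      (C * NormedSpace.exp (s • C)) s := hasDerivAt_exp_smul_const' C s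
  exact (((entryCLM n i j).comp (phiL n B C)).hasFDerivAt.comp_hasDerivAt s h1)

theorem continuous_exp_entry (n : ℕ) (A : Matrix (Fin 1 ⊕ Fin n) (Fin 1 ⊕ Fin n) ℝ)
    (i j : Fin 1 ⊕ Fin n) :
    Continuous fun s : ℝ => (NormedSpace.exp (s • A)) i j := by
  letI : NormedRing (Matrix (Fin 1 ⊕ Fin n) (Fin 1 ⊕ Fin n) ℝ) := Matrix.linftyOpNormedRing
  letI : NormedAlgebra ℝ (Matrix (Fin 1 ⊕ Fin n) (Fin 1 ⊕ Fin n) ℝ) :=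
    Matrix.linftyOpNormedAlgebra
  letI : NormedAlgebra ℚ (Matrix (Fin 1 ⊕ Fin n) (Fin 1 ⊕ Fin n) ℝ) :=
    NormedAlgebra.restrictScalars ℚ ℝ _
  have : Continuous fun s : ℝ => NormedSpace.exp (s • A) :=
    NormedSpace.exp_continuous.comp (continuous_id.smul continuous_const)
  exact ((continuous_apply j).comp ((continuous_apply i).comp this))

set_option maxHeartbeats 1000000 in
/-- For a block matrix `A = [[0, bᵀ],[0, C]]` with `C` invertible, the entrywise integral
`∫₀ᵗ e^{As} ds = [[t, bᵀ (C⁻¹)² (e^{Ct} − I) − t bᵀ C⁻¹],[0, C⁻¹ (e^{Ct} − I)]]` for `t ≥ 0`. -/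
theorem block_matrix_exp_integral (n : ℕ) (b : Fin n → ℝ) (C : Matrix (Fin n) (Fin n) ℝ)
    (hC : IsUnit C.det) (t : ℝ) (ht : 0 ≤ t) :
    ∀ i j, (∫ s in (0:ℝ)..t,
        (NormedSpace.exp
          (s • Matrix.fromBlocks (0 : Matrix (Fin 1) (Fin 1) ℝ)
            (Matrix.of fun _ j => b j) (0 : Matrix (Fin n) (Fin 1) ℝ) C)) i j) =
      (Matrix.fromBlocks (t • (1 : Matrix (Fin 1) (Fin 1) ℝ))
        ((Matrix.of fun _ j => b j) * ((C⁻¹ * C⁻¹) * (NormedSpace.exp (t • C) - 1))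
          - t • ((Matrix.of fun _ j => b j) * C⁻¹))
        (0 : Matrix (Fin n) (Fin 1) ℝ)
        (C⁻¹ * (NormedSpace.exp (t • C) - 1))) i j := by
  intro i j
  set B : Matrix (Fin 1) (Fin n) ℝ := Matrix.of fun _ j => b j with hB
  set A := Matrix.fromBlocks (0 : Matrix (Fin 1) (Fin 1) ℝ) B 0 C with hA
  set Φ := phiL n B C with hPhi
  set J : Matrix (Fin 1 ⊕ Fin n) (Fin 1 ⊕ Fin n) ℝ := Matrix.fromBlocks 1 (-(B * C⁻¹)) 0 0
    with hJ
  have hid : ∀ s : ℝ, Φ (C * NormedSpace.exp (s • C)) + J = NormedSpace.exp (s • A) := by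
    intro s
    rw [hA, exp_fromBlocks B C hC s, hPhi, phiL_apply]
    have h2 : C⁻¹ * (C * NormedSpace.exp (s • C)) = NormedSpace.exp (s • C) :=
      Matrix.nonsing_inv_mul_cancel_left _ _ hC
    have h1 : (C⁻¹ * C⁻¹) * (C * NormedSpace.exp (s • C)) = C⁻¹ * NormedSpace.exp (s • C) :=
      by rw [Matrix.mul_assoc, h2]
    rw [h1, h2, hJ, Matrix.fromBlocks_add]
    simp [Matrix.mul_sub, Matrix.mul_one, sub_eq_add_neg, Matrix.mul_add, Matrix.mul_neg]
  have hder : ∀ s ∈ Set.uIcc (0:ℝ) t, HasDerivAt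
      (fun u : ℝ => (Φ (NormedSpace.exp (u • C)) + u • J - Φ 1) i j)
      ((NormedSpace.exp (s • A)) i j) s := by
    intro s _
    have h1 := hasDerivAt_exp_entry n B C i j s
    have h2 : HasDerivAt (fun u : ℝ => u * J i j) (J i j) s := hasDerivAt_mul_const _
    have h3 : HasDerivAt (fun u : ℝ => (Φ (NormedSpace.exp (u • C))) i j + u * J i j - (Φ 1) i j)
        ((Φ (C * NormedSpace.exp (s • C))) i j + J i j) s := (h1.add h2).sub_const ((Φ 1) i j)
    have heq : (fun u : ℝ => (Φ (NormedSpace.exp (u • C))) i j + u * J i j - (Φ 1) i j)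
        = fun u : ℝ => (Φ (NormedSpace.exp (u • C)) + u • J - Φ 1) i j := by
      funext u; simp [Matrix.add_apply, Matrix.sub_apply, Matrix.smul_apply]
    rw [heq] at h3
    have h4 : (Φ (C * NormedSpace.exp (s • C))) i j + J i j
        = (NormedSpace.exp (s • A)) i j := by rw [← hid s]; simp [Matrix.add_apply]
    rwa [h4] at h3
  have hFTC := intervalIntegral.integral_eq_sub_of_hasDerivAt hder
    ((continuous_exp_entry n A i j).intervalIntegrable 0 t)
  rw [hFTC]
  have hzero : Φ (NormedSpace.exp ((0:ℝ) • C)) + (0:ℝ) • J - Φ 1 = 0 := by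
    rw [zero_smul, NormedSpace.exp_zero, zero_smul]
    simp
  have hfinal : Φ (NormedSpace.exp (t • C)) + t • J - Φ 1 =
      Matrix.fromBlocks (t • (1 : Matrix (Fin 1) (Fin 1) ℝ))
        (B * ((C⁻¹ * C⁻¹) * (NormedSpace.exp (t • C) - 1)) - t • (B * C⁻¹))
        (0 : Matrix (Fin n) (Fin 1) ℝ)
        (C⁻¹ * (NormedSpace.exp (t • C) - 1)) := by
    rw [hPhi, phiL_apply, phiL_apply, hJ]
    simp only [Matrix.mul_sub, Matrix.mul_one]
    apply Matrix.ext
    rintro (i1 | i1) (j1 | j1) <;>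
      simp [Matrix.add_apply, Matrix.sub_apply, Matrix.smul_apply, Matrix.neg_apply,
        Matrix.mul_one] <;> ring
  rw [hzero, hfinal]
  simp
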